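/- In the horizon-H 'counter' latent MDP, fix h ∈ [H] and a state s̄_h, and any fixed action sequence a₁, ..., a_H ∈ {0,1}^H. Then the probability that the trajectory is at state s̄_h at step h equals 1 - 2^{1-h} if s̄_h = (h, 2), and 2^{-h} if s̄_h ∈ {(h, 0), (h, 1)}. In particular, this probability does not depend on the action sequence (open-loop indistinguishability). -/
import Mathlib


/-- Latent transition kernel of the MDP from the oracle lower bound: states at each step
are tagged by `Fin 3` (`0`, `1`, or the failure tag `2`); from tag `2` any action leads to
tag `2`; from tag `b ∈ {0,1}`, playing action `a ≠ b` leads to tag `2` deterministically,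
while playing `a = b` leads to tags `0` and `1` each with probability `1/2`. -/
noncomputable def oracleStep (t : Fin 3) (a : Fin 2) (t' : Fin 3) : ℝ :=
  if t = 2 then (if t' = 2 then 1 else 0)
  else if (t : ℕ) = (a : ℕ) then (if t' = 2 then 0 else 1 / 2)
  else (if t' = 2 then 1 else 0)

/-- Initial distribution: uniform over tags `0` and `1`. -/
noncomputable def oracleInit (t : Fin 3) : ℝ := if t = 2 then 0 else 1 / 2

/-- The tag of a length-`H` latent trajectory at (0-based) step `g`, with junk value `2`
out of range. -/
def getTag {H : ℕ} (s : Fin H → Fin 3) (g : ℕ) : Fin 3 :=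
  if hg : g < H then s ⟨g, hg⟩ else 2


lemma getTag_snoc_lt {n : ℕ} (s : Fin n → Fin 3) (t : Fin 3) {g : ℕ} (hg : g < n) :
    getTag (Fin.snoc s t) g = getTag s g := by
  have h1 : g < n + 1 := Nat.lt_succ_of_lt hg
  unfold getTag
  rw [dif_pos h1, dif_pos hg]
  have h2 : (⟨g, h1⟩ : Fin (n+1)) = Fin.castSucc ⟨g, hg⟩ := rfl
  rw [h2, Fin.snoc_castSucc]

lemma getTag_snoc_last {n : ℕ} (s : Fin n → Fin 3) (t : Fin 3) :
    getTag (Fin.snoc s t) n = t := by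
  unfold getTag
  rw [dif_pos (Nat.lt_succ_self n)]
  have h2 : (⟨n, Nat.lt_succ_self n⟩ : Fin (n+1)) = Fin.last n := rfl
  rw [h2, Fin.snoc_last]

open Finset in
lemma sum_last (a : ℕ → Fin 2) : ∀ n : ℕ, ∀ t : Fin 3,
    (∑ s : Fin (n+1) → Fin 3,
        if getTag s n = t then
          oracleInit (getTag s 0) *
            ∏ g ∈ Finset.range n, oracleStep (getTag s g) (a g) (getTag s (g+1))
        else 0)
      = if t = 2 then 1 - (1/2:ℝ)^n else (1/2:ℝ)^(n+1) := by
  intro n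
  induction n with
  | zero =>
    intro t
    have e : ∀ s : Fin 1 → Fin 3,
        (if getTag s 0 = t then
          oracleInit (getTag s 0) *
            ∏ g ∈ Finset.range 0, oracleStep (getTag s g) (a g) (getTag s (g+1))
        else 0) = (if s default = t then oracleInit (s default) else 0) := by
      intro s
      have : getTag s 0 = s default := rfl
      simp [this]
    rw [Finset.sum_congr rfl (fun s _ => e s)]
    have hsum := Fintype.sum_equiv (Equiv.funUnique (Fin 1) (Fin 3))
      (fun s : Fin 1 → Fin 3 => if s default = t then oracleInit (s default) else 0)
      (fun u : Fin 3 => if u = t then oracleInit u else 0) (fun s => rfl)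
    rw [hsum, Finset.sum_ite_eq' Finset.univ t oracleInit]
    fin_cases t <;> simp [oracleInit] <;> norm_num
  | succ n ih =>
    intro t
    rw [← (Fin.snocEquiv (fun _ : Fin (n+2) => Fin 3)).sum_comp]
    rw [Fintype.sum_prod_type]
    have hsnoc : ∀ (t' : Fin 3) (s : Fin (n+1) → Fin 3),
        (Fin.snocEquiv (fun _ : Fin (n+2) => Fin 3)) (t', s) = Fin.snoc s t' :=
      fun _ _ => rfl
    simp only [hsnoc]
    have key : ∀ (t' : Fin 3) (s : Fin (n+1) → Fin 3),
        (if getTag (Fin.snoc s t') (n+1) = t then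
          oracleInit (getTag (Fin.snoc s t') 0) *
            ∏ g ∈ Finset.range (n+1),
              oracleStep (getTag (Fin.snoc s t') g) (a g) (getTag (Fin.snoc s t') (g+1))
        else 0)
        = (if t' = t then
            (oracleInit (getTag s 0) *
              ∏ g ∈ Finset.range n, oracleStep (getTag s g) (a g) (getTag s (g+1))) *
            oracleStep (getTag s n) (a n) t'
          else 0) := by
      intro t' s
      rw [getTag_snoc_last]
      rw [Finset.prod_range_succ]
      rw [getTag_snoc_lt s t' (Nat.lt_succ_self n), getTag_snoc_last]
      have hrest : ∀ g ∈ Finset.range n,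
          oracleStep (getTag (Fin.snoc s t') g) (a g) (getTag (Fin.snoc s t') (g+1))
            = oracleStep (getTag s g) (a g) (getTag s (g+1)) := by
        intro g hg
        rw [Finset.mem_range] at hg
        rw [getTag_snoc_lt s t' (hg.trans (Nat.lt_succ_self n)),
            getTag_snoc_lt s t' (Nat.succ_lt_succ hg)]
      rw [Finset.prod_congr rfl hrest,
          getTag_snoc_lt s t' (Nat.zero_lt_succ n), mul_assoc]
    simp only [key]
    rw [Finset.sum_eq_single t]
    · simp only [if_true]
      have expand : ∀ s : Fin (n+1) → Fin 3,
          (oracleInit (getTag s 0) *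
              ∏ g ∈ Finset.range n, oracleStep (getTag s g) (a g) (getTag s (g+1))) *
            oracleStep (getTag s n) (a n) t
          = ∑ u : Fin 3, (if getTag s n = u then
              oracleInit (getTag s 0) *
                ∏ g ∈ Finset.range n, oracleStep (getTag s g) (a g) (getTag s (g+1))
              else 0) * oracleStep u (a n) t := by
        intro s
        rw [Finset.sum_eq_single (getTag s n)]
        · simp
        · intro u _ hu; simp [Ne.symm hu]
        · simp
      rw [Finset.sum_congr rfl (fun s _ => expand s), Finset.sum_comm]
      simp only [← Finset.sum_mul]
      simp only [ih]
      generalize a n = b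
      fin_cases t <;> fin_cases b <;>
        simp [oracleStep, Fin.sum_univ_three] <;> ring_nf <;> norm_num <;> ring
    · intro t' _ ht'
      exact Finset.sum_eq_zero (fun s _ => by simp [ht'])
    · simp

lemma oracleStep_row (t : Fin 3) (a : Fin 2) : ∑ t' : Fin 3, oracleStep t a t' = 1 := by
  fin_cases t <;> fin_cases a <;> simp [oracleStep, Fin.sum_univ_three] <;> norm_num

open Finset in
lemma sum_marg (a : ℕ → Fin 2) (k : ℕ) (t : Fin 3) :
    ∀ H : ℕ, k + 1 ≤ H →
    (∑ s : Fin H → Fin 3,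
        if getTag s k = t then
          oracleInit (getTag s 0) *
            ∏ g ∈ Finset.range (H-1), oracleStep (getTag s g) (a g) (getTag s (g+1))
        else 0)
      = (∑ s : Fin (k+1) → Fin 3,
        if getTag s k = t then
          oracleInit (getTag s 0) *
            ∏ g ∈ Finset.range k, oracleStep (getTag s g) (a g) (getTag s (g+1))
        else 0) := by
  refine Nat.le_induction ?_ ?_
  · simp
  · intro H hH ih
    obtain ⟨m, rfl⟩ : ∃ m, H = m + 1 :=
      ⟨H - 1, (Nat.succ_pred_eq_of_pos (Nat.lt_of_lt_of_le (Nat.succ_pos k) hH)).symm⟩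
    rw [← (Fin.snocEquiv (fun _ : Fin (m+2) => Fin 3)).sum_comp, Fintype.sum_prod_type]
    have hsnoc : ∀ (t' : Fin 3) (s : Fin (m+1) → Fin 3),
        (Fin.snocEquiv (fun _ : Fin (m+2) => Fin 3)) (t', s) = Fin.snoc s t' :=
      fun _ _ => rfl
    simp only [hsnoc]
    have hk : k < m + 1 := hH
    have key : ∀ (t' : Fin 3) (s : Fin (m+1) → Fin 3),
        (if getTag (Fin.snoc s t') k = t then
          oracleInit (getTag (Fin.snoc s t') 0) *
            ∏ g ∈ Finset.range (m+1+1-1),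
              oracleStep (getTag (Fin.snoc s t') g) (a g) (getTag (Fin.snoc s t') (g+1))
        else 0)
        = (if getTag s k = t then
            oracleInit (getTag s 0) *
              ∏ g ∈ Finset.range m, oracleStep (getTag s g) (a g) (getTag s (g+1))
          else 0) * oracleStep (getTag s m) (a m) t' := by
      intro t' s
      have hm11 : m + 1 + 1 - 1 = m + 1 := rfl
      rw [hm11, Finset.prod_range_succ]
      rw [getTag_snoc_lt s t' hk, getTag_snoc_lt s t' (Nat.zero_lt_succ m),
          getTag_snoc_lt s t' (Nat.lt_succ_self m), getTag_snoc_last]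
      have hrest : ∀ g ∈ Finset.range m,
          oracleStep (getTag (Fin.snoc s t') g) (a g) (getTag (Fin.snoc s t') (g+1))
            = oracleStep (getTag s g) (a g) (getTag s (g+1)) := by
        intro g hg
        rw [Finset.mem_range] at hg
        rw [getTag_snoc_lt s t' (hg.trans (Nat.lt_succ_self m)),
            getTag_snoc_lt s t' (Nat.succ_lt_succ hg)]
      rw [Finset.prod_congr rfl hrest, ite_mul, zero_mul, mul_assoc]
    simp only [key]
    rw [Finset.sum_comm]
    have inner : ∀ s : Fin (m+1) → Fin 3,
        (∑ t' : Fin 3,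
          (if getTag s k = t then
            oracleInit (getTag s 0) *
              ∏ g ∈ Finset.range m, oracleStep (getTag s g) (a g) (getTag s (g+1))
          else 0) * oracleStep (getTag s m) (a m) t')
        = (if getTag s k = t then
            oracleInit (getTag s 0) *
              ∏ g ∈ Finset.range m, oracleStep (getTag s g) (a g) (getTag s (g+1))
          else 0) := by
      intro s
      rw [← Finset.mul_sum, oracleStep_row, mul_one]
    rw [Finset.sum_congr rfl (fun s _ => inner s)]
    simpa using ih

/-- **open-loop indistinguishability.** In the horizon-`H` latent MDP above,
fix a step `h ∈ [H]`, a tag `tbar`, and any fixed action sequence `a`. Then the probability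
that the trajectory has tag `tbar` at step `h` equals `1 - 2^{1-h}` if `tbar = 2`, and `2^{-h}`
if `tbar ∈ {0, 1}`; in particular it does not depend on the action sequence. -/
theorem open_loop_indistinguishability (H : ℕ) (hH : 1 ≤ H) (a : ℕ → Fin 2)
    (h : ℕ) (hh1 : 1 ≤ h) (hhH : h ≤ H) (tbar : Fin 3) :
    (∑ s : Fin H → Fin 3,
        if getTag s (h - 1) = tbar then
          oracleInit (getTag s 0) *
            ∏ g ∈ Finset.range (H - 1), oracleStep (getTag s g) (a g) (getTag s (g + 1))
        else 0)
      = if tbar = 2 then 1 - 2 * (1 / 2 : ℝ) ^ h else (1 / 2 : ℝ) ^ h := by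
  obtain ⟨k, rfl⟩ : ∃ k, h = k + 1 := ⟨h - 1, by omega⟩
  have h1 : k + 1 - 1 = k := rfl
  rw [h1, sum_marg a k tbar H hhH, sum_last a k tbar]
  fin_cases tbar <;> simp <;> ring
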